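/- arXiv:2201.06306 — 2 statements merged into one kernel-verified Lean document; each statement's English description precedes it below -/
import Mathlib

section
/- For every integer n > 3, the T_1(n) list of sequences is strongly complete over A = {1, 2, …, n}. -/
/-- `ρ ∈ [A]_k`: a sequence over `A` of length `k` with pairwise distinct elements. -/
def DistinctSeq (A : Finset ℕ) (k : ℕ) (ρ : List ℕ) : Prop :=
  ρ.length = k ∧ ρ.Nodup ∧ ∀ a ∈ ρ, a ∈ A

/-- `σ` is `k`-complete over `A`: every member of `[A]_k` is a subsequence of `σ`. -/
def IsKComplete (A : Finset ℕ) (k : ℕ) (σ : List ℕ) : Prop :=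
  ∀ ρ : List ℕ, DistinctSeq A k ρ → ρ.Sublist σ

/-- `σ` is a supersequence over `A`: it contains every permutation of `A` as a
subsequence, i.e. it is `|A|`-complete. -/
def IsSupersequence (A : Finset ℕ) (σ : List ℕ) : Prop :=
  IsKComplete A A.card σ

/-- A list of sequences `σ₁, …, σ_n` is forward complete if for every `1 ≤ k ≤ n`,
the concatenation `σ₁σ₂⋯σ_k` is `k`-complete. -/
def ForwardComplete (A : Finset ℕ) (L : List (List ℕ)) : Prop :=
  ∀ k, 1 ≤ k → k ≤ L.length → IsKComplete A k ((L.take k).flatten)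

/-- A list of sequences `σ₁, …, σ_n` is backward complete if for every `1 ≤ k ≤ n`,
the concatenation `σ_{n-k+1}⋯σ_n` is `k`-complete. -/
def BackwardComplete (A : Finset ℕ) (L : List (List ℕ)) : Prop :=
  ∀ k, 1 ≤ k → k ≤ L.length → IsKComplete A k ((L.drop (L.length - k)).flatten)

/-- Strongly complete: both forward and backward complete. -/
def StronglyComplete (A : Finset ℕ) (L : List (List ℕ)) : Prop :=
  ForwardComplete A L ∧ BackwardComplete A L

/-- The `T₁(n)` sequences (1-indexed): `T1 n k` is the `k`-th sequence `σ_k`.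
`σ₁ = ⟨1,…,n⟩`, `σ₂ = ⟨1,…,n-1⟩`, for `2 < k < n`,
`σ_k = σ_{k-2}[-1] · σ_{k-1}[1,-2]`, and `σ_n = σ_{n-2}[-1] · σ_{n-1}[1,-1]`. -/
def T1 (n : ℕ) : ℕ → List ℕ
  | 0 => []
  | 1 => List.range' 1 n
  | 2 => List.range' 1 (n-1)
  | (k+3) =>
      (T1 n (k+1)).getLastD 0 ::
        (if k + 3 = n then T1 n (k+2) else (T1 n (k+2)).dropLast)

/-- The `T₁(n)` list of sequences `σ₁, σ₂, …, σ_n`. -/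
def T1List (n : ℕ) : List (List ℕ) := (List.range n).map (fun i => T1 n (i+1))

/-!
Call blocks `τ₁, …, τ_k` a cover chain over `A` if each `τ_i` contains every element of `A`
except possibly the first element of `τ_{i+1}`, and `τ_k` contains all of `A`. A repetition-free
word `a₁ ⋯ a_k` over `A` then embeds greedily into `τ₁ ⋯ τ_k`: if `a₁ ∉ τ₁`, then `a₁` opens `τ₂`,
and the rest of the word avoids `a₁`, so it embeds into the remainder of `τ₂` followed by
`τ₃, …, τ_k`, a cover chain over `A \ {a₁}`. Suffixes of cover chains are cover chains, which gives
backward completeness; the reversed list of reversed blocks gives forward completeness.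

For `T₁(n)`, the recursion `σ_j = last σ_{j-2} · dropLast σ_{j-1}` shows inductively that `σ_j`
misses at most `last σ_{j-1}`, which is also the first element of `σ_{j+1}`, while `σ₁` and `σ_n`
contain all of `A`. So `T₁(n)` is a cover chain read in either direction.
-/

namespace List

variable {α : Type*}

/-- `(L.headD []).head?` is the first element of the next block, and `none` after the last block,
which therefore has to contain all of `A`. -/
def IsCoverChain (A : Set α) : List (List α) → Prop
  | [] => True
  | τ :: L => (∀ a ∈ A, a ∈ τ ∨ (L.headD []).head? = some a) ∧ IsCoverChain A L

namespace IsCoverChain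

variable {A B : Set α} {L : List (List α)}

theorem mono (hBA : B ⊆ A) (h : IsCoverChain A L) : IsCoverChain B L := by
  induction L with
  | nil => trivial
  | cons τ L ih => exact ⟨fun a ha => h.1 a (hBA ha), ih h.2⟩

theorem drop (h : IsCoverChain A L) (m : ℕ) : IsCoverChain A (L.drop m) := by
  induction m generalizing L with
  | zero => exact h
  | succ m ih =>
    cases L with
    | nil => trivial
    | cons τ L => exact ih h.2

theorem sdiff_singleton {a : α} {τ : List α} (h : IsCoverChain A ((a :: τ) :: L)) :
    IsCoverChain (A \ {a}) (τ :: L) := by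
  refine ⟨fun b ⟨hb, hba⟩ => ?_, h.2.mono Set.sdiff_subset⟩
  rcases h.1 b hb with hbτ | hnext
  · exact .inl ((mem_cons.1 hbτ).resolve_left hba)
  · exact .inr hnext

theorem sublist_flatten {ρ : List α} (h : IsCoverChain A L) (hρ : ρ.Nodup)
    (hρA : ∀ a ∈ ρ, a ∈ A) (hlen : ρ.length = L.length) : ρ <+ L.flatten := by
  induction ρ generalizing A L with
  | nil => exact nil_sublist _
  | cons a ρ ih =>
    obtain ⟨haρ, hρ'⟩ := nodup_cons.1 hρ
    obtain _ | ⟨τ, L⟩ := L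
    · simp at hlen
    simp only [length_cons, Nat.add_right_cancel_iff] at hlen
    rw [flatten_cons]
    rcases h.1 a (hρA a mem_cons_self) with haτ | hnext
    · exact (singleton_sublist.2 haτ).append
        (ih h.2 hρ' (fun b hb => hρA b (mem_cons_of_mem a hb)) hlen)
    · obtain _ | ⟨_ | ⟨c, τ'⟩, L'⟩ := L <;>
        simp only [headD_nil, headD_cons, head?_nil, head?_cons, reduceCtorEq,
          Option.some.injEq] at hnext
      subst hnext
      have hrest := ih h.2.sdiff_singleton hρ'
        (fun b hb => ⟨hρA b (mem_cons_of_mem c hb), fun hbc => haρ (hbc ▸ hb)⟩) (by simpa using hlen)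
      simpa using (hrest.cons_cons c).trans (sublist_append_right τ _)

end IsCoverChain

theorem isCoverChain_map_range' {A : Set α} {f : ℕ → List α} {s t : ℕ}
    (hstep : ∀ i, s ≤ i → i + 1 < s + t → ∀ a ∈ A, a ∈ f i ∨ (f (i + 1)).head? = some a)
    (hlast : ∀ a ∈ A, a ∈ f (s + t - 1)) :
    IsCoverChain A ((range' s t).map f) := by
  induction t generalizing s with
  | zero => trivial
  | succ t ih =>
    rw [range'_succ, map_cons]
    refine ⟨fun a ha => ?_, ih (fun i hi hit => hstep i (by omega) (by omega)) ?_⟩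
    · rcases t with _ | t
      · exact .inl (hlast a ha)
      · rw [range'_succ, map_cons, headD_cons]
        exact hstep s le_rfl (by omega) a ha
    · simpa [Nat.add_assoc, Nat.add_comm 1 t] using hlast

end List

section Completeness

variable {A : Finset ℕ} {L : List (List ℕ)}

theorem List.IsCoverChain.backwardComplete (h : L.IsCoverChain ↑A) : BackwardComplete A L := by
  rintro k - hk ρ ⟨hlen, hnd, hmem⟩
  exact (h.drop _).sublist_flatten hnd hmem (by simp only [List.length_drop]; omega)

theorem forwardComplete_of_isCoverChain_reverse
    (h : (L.map List.reverse).reverse.IsCoverChain ↑A) : ForwardComplete A L := by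
  rintro k - hk ρ ⟨hlen, hnd, hmem⟩
  rw [← List.reverse_sublist, List.reverse_flatten, List.map_take, List.reverse_take,
    List.length_map]
  refine (h.drop _).sublist_flatten (List.nodup_reverse.2 hnd)
    (fun a ha => hmem a (List.mem_reverse.1 ha)) ?_
  simp only [List.length_reverse, List.length_drop, List.length_map]
  omega

end Completeness

section T1

variable {n : ℕ}

theorem T1_add_three_of_lt {k : ℕ} (hk : k + 3 < n) :
    T1 n (k + 3) = (T1 n (k + 1)).getLastD 0 :: (T1 n (k + 2)).dropLast := by
  rw [T1, if_neg hk.ne]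

theorem T1_self (hn : 3 ≤ n) : T1 n n = (T1 n (n - 2)).getLastD 0 :: T1 n (n - 1) := by
  obtain ⟨k, rfl⟩ := Nat.exists_eq_add_of_le' hn
  rw [T1, if_pos rfl]
  rfl

theorem head?_T1 {k : ℕ} (hk : 3 ≤ k) : (T1 n k).head? = some ((T1 n (k - 2)).getLastD 0) := by
  obtain ⟨k, rfl⟩ := Nat.exists_eq_add_of_le' hk
  rw [T1]
  rfl

theorem T1_ne_nil (hn : 2 ≤ n) : ∀ {k : ℕ}, 1 ≤ k → T1 n k ≠ []
  | 1, _ => by simp [T1]; omega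
  | 2, _ => by simp [T1]; omega
  | _ + 3, _ => by simp [T1]

theorem mem_T1_one {a : ℕ} (ha : a ∈ Finset.Icc 1 n) : a ∈ T1 n 1 := by
  simp only [Finset.mem_Icc] at ha
  simp only [T1, List.mem_range'_1]
  omega

theorem mem_T1_or_eq_getLastD {j a : ℕ} (hj : 2 ≤ j) (hjn : j < n) (ha : a ∈ Finset.Icc 1 n) :
    a ∈ T1 n j ∨ a = (T1 n (j - 1)).getLastD 0 := by
  induction j, hj using Nat.le_induction with
  | base =>
    simp only [Finset.mem_Icc] at ha
    show a ∈ T1 n 2 ∨ a = (T1 n 1).getLastD 0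
    simp only [T1, List.mem_range'_1, List.getLastD_eq_getLast?, List.getLast?_range']
    split_ifs <;> simp <;> omega
  | succ j hj ih =>
    obtain ⟨k, rfl⟩ := Nat.exists_eq_add_of_le' hj
    rw [T1_add_three_of_lt hjn, List.mem_cons]
    rcases ih (by omega) with hmem | hlast
    · by_cases hlast : a = (T1 n (k + 2)).getLastD 0
      · exact .inr hlast
      · exact .inl (.inr (List.mem_dropLast_of_mem_of_ne_getLastD hmem hlast))
    · exact .inl (.inl hlast)

theorem mem_T1_self (hn : 3 ≤ n) {a : ℕ} (ha : a ∈ Finset.Icc 1 n) : a ∈ T1 n n := by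
  rw [T1_self hn, List.mem_cons]
  rcases mem_T1_or_eq_getLastD (j := n - 1) (by omega) (by omega) ha with hmem | hlast
  · exact .inr hmem
  · exact .inl (by rwa [show n - 1 - 1 = n - 2 by omega] at hlast)

theorem isCoverChain_T1List (hn : 3 ≤ n) : (T1List n).IsCoverChain ↑(Finset.Icc 1 n) := by
  rw [T1List, List.range_eq_range']
  refine List.isCoverChain_map_range' (fun i _ hi a ha => ?_) (fun a ha => ?_)
  · rcases Nat.eq_zero_or_pos i with rfl | hi0
    · exact .inl (mem_T1_one ha)
    · rcases mem_T1_or_eq_getLastD (j := i + 1) (by omega) (by omega) ha with hmem | hlast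
      · exact .inl hmem
      · rw [head?_T1 (by omega), hlast]
        exact .inr rfl
  · simpa [Nat.sub_add_cancel (by omega : 1 ≤ n)] using mem_T1_self hn ha

theorem isCoverChain_T1List_reverse (hn : 3 ≤ n) :
    ((T1List n).map List.reverse).reverse.IsCoverChain ↑(Finset.Icc 1 n) := by
  rw [T1List, List.map_map, ← List.map_reverse, List.range_eq_range', List.reverse_range',
    List.map_map, List.range_eq_range']
  refine List.isCoverChain_map_range' (fun i _ hi a ha => ?_) (fun a ha => ?_)
  · simp only [Function.comp_apply, List.mem_reverse, List.head?_reverse]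
    rcases Nat.eq_zero_or_pos i with rfl | hi0
    · exact .inl (by simpa [Nat.sub_add_cancel (by omega : 1 ≤ n)] using mem_T1_self hn ha)
    · rcases mem_T1_or_eq_getLastD (j := n - i) (by omega) (by omega) ha with hmem | hlast
      · exact .inl (by rwa [show 0 + n - 1 - i + 1 = n - i by omega])
      · right
        rw [show 0 + n - 1 - (i + 1) + 1 = n - i - 1 by omega, hlast, List.getLastD_eq_getLast?,
          List.getLast?_eq_some_getLast (T1_ne_nil (by omega) (by omega))]
        rfl
  · simpa using mem_T1_one ha

end T1

/-- **Theorem 8.** For every integer `n > 3`, the `T₁(n)` list of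
sequences is strongly complete over `A = {1,…,n}`. -/
theorem T1List_stronglyComplete (n : ℕ) (hn : 3 < n) :
    StronglyComplete (Finset.Icc 1 n) (T1List n) :=
  ⟨forwardComplete_of_isCoverChain_reverse (isCoverChain_T1List_reverse hn.le),
    (isCoverChain_T1List hn.le).backwardComplete⟩
end

section
/- Let n ≥ 6 with n ≡ 0 (mod 3) and let σ₁, …, σ_n be the T_2(n) list of sequences over A = {1, 2, …, n}. Let k be an integer with 3 < k < n−2 and k ≡ 2 (mod 3), and assume the list σ₁, …, σ_{k−2} is forward complete. Then every ρ ∈ [A]_k with last element ρ[k] = n is a subsequence of the concatenation σ₁σ₂⋯σ_{k−1}. -/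
/-- The `T₂(n)` sequences (1-indexed): `T2 n k` is the `k`-th sequence `σ_k`,
for `n ≥ 6`, `n ≡ 0 (mod 3)`, following Definition 9 of the paper. -/
def T2 (n : ℕ) : ℕ → List ℕ
  | 0 => []
  | 1 => T1 n 1
  | 2 => T1 n 2
  | 3 => T1 n 3
  | (k+4) =>
      let K := k+4
      let p := T2 n (k+3)  -- σ_{K-1}
      let q := T2 n (k+2)  -- σ_{K-2}
      let l := p.length
      if K = n then
        -- σ_n = σ_{n-2}[-1] · σ_{n-1}[1,-1]
        q.getLastD 0 :: p
      else if K = n-1 then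
        -- σ_{n-1} = σ_{n-3}[-1] · σ_{n-2}[1,-2]
        q.getLastD 0 :: p.dropLast
      else if K = n-2 then
        -- σ_{n-2} = σ_{n-4}[-1] · σ_{n-3}[1] · σ_{n-3}[3,-2] · n
        q.getLastD 0 :: p.headD 0 :: (p.dropLast.drop 2 ++ [n])
      else if K % 3 = 1 then
        if K = 4 then
          -- σ₄ = σ₂[-1] · σ₃[2,-3] · n · σ₃[-2]
          q.getLastD 0 :: ((p.take (l-2)).drop 1 ++ [n, p.dropLast.getLastD 0])
        else
          -- σ_k = σ_{k-2}[-1] · σ_{k-1}[1] · σ_{k-1}[3,-3] · n · σ_{k-1}[-2]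
          q.getLastD 0 :: p.headD 0 :: ((p.take (l-2)).drop 2 ++ [n, p.dropLast.getLastD 0])
      else if K % 3 = 2 then
        -- σ_k = σ_{k-2}[-1] · σ_{k-1}[1,-3]
        q.getLastD 0 :: p.take (l-2)
      else
        -- σ_k = σ_{k-2}[-1] · n · σ_{k-1}[1,-2]
        q.getLastD 0 :: n :: p.dropLast

/-- The `T₂(n)` list of sequences `σ₁, σ₂, …, σ_n`. -/
def T2List (n : ℕ) : List (List ℕ) := (List.range n).map (fun i => T2 n (i+1))

open List

section ListLemmas

variable {α : Type*}

theorem sublist_of_sublist_append_singleton {γ M : List α} {x : α}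
    (h : γ <+ M ++ [x]) (hx : x ∉ γ) : γ <+ M := by
  obtain ⟨γ₁, γ₂, rfl, h₁, h₂⟩ := sublist_append_iff.1 h
  rcases sublist_singleton.1 h₂ with rfl | rfl
  · simpa using h₁
  · simp at hx

theorem eq_nil_or_eq_singleton_of_sublist_cons {δ T : List α} {a b : α} (hδ : δ.Nodup)
    (h : δ <+ a :: T) (ha : a ∉ δ) (hT : ∀ c ∈ T, c ∉ δ ∨ c = b) : δ = [] ∨ δ = [b] := by
  refine subperm_singleton_iff.1 (hδ.subperm fun c hc => ?_)
  rcases mem_cons.1 (h.subset hc) with rfl | hcT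
  · exact absurd hc ha
  · rcases hT c hcT with h' | rfl
    · exact absurd hc h'
    · exact mem_singleton_self c

theorem exists_eq_append_pair_of_getLastD {ρ : List α} {d z : α}
    (h : 2 ≤ ρ.length) (hz : ρ.getLastD d = z) : ∃ ρ' x, ρ = ρ' ++ [x, z] := by
  rcases ρ.eq_nil_or_concat with rfl | ⟨ρ₁, b, rfl⟩
  · simp at h
  rcases ρ₁.eq_nil_or_concat with rfl | ⟨ρ', x, rfl⟩
  · simp at h
  exact ⟨ρ', x, by simp_all⟩

theorem take_length_sub_two_append_pair (X : List α) (u v : α) :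
    (X ++ [u, v]).take ((X ++ [u, v]).length - 2) = X := by
  simp

theorem getLastD_dropLast_append_pair (X : List α) (u v d : α) :
    ((X ++ [u, v]).dropLast).getLastD d = u := by
  simp

theorem range'_one_succ (p : ℕ) : range' 1 (p + 1) = range' 1 p ++ [p + 1] := by
  rw [range'_1_concat, Nat.add_comm]

end ListLemmas

section Blocks

variable {α : Type*} (σ : ℕ → List α)

def blockPrefix (j : ℕ) : List α := ((range j).map fun i => σ (i + 1)).flatten

variable {σ}

theorem blockPrefix_succ (j : ℕ) : blockPrefix σ (j + 1) = blockPrefix σ j ++ σ (j + 1) := by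
  simp [blockPrefix, range_succ]

theorem flatten_take_map_range {N j : ℕ} (h : j ≤ N) :
    (((range N).map fun i => σ (i + 1)).take j).flatten = blockPrefix σ j := by
  rw [← map_take, take_range, Nat.min_eq_left h, blockPrefix]

theorem blockPrefix_prefix_of_le {i j : ℕ} (h : i ≤ j) : blockPrefix σ i <+: blockPrefix σ j := by
  induction j, h using Nat.le_induction with
  | base => exact prefix_refl _
  | succ j _ ih => exact ih.trans (blockPrefix_succ j ▸ prefix_append _ _)

theorem append_sublist_blockPrefix {γ β : List α} {i j : ℕ} (hγ : γ <+ blockPrefix σ i)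
    (hij : i < j) (hβ : β <+ σ j) : γ ++ β <+ blockPrefix σ j := by
  obtain ⟨j, rfl⟩ : ∃ j', j = j' + 1 := ⟨j - 1, by omega⟩
  rw [blockPrefix_succ]
  exact (hγ.trans (blockPrefix_prefix_of_le (by omega)).sublist).append hβ

theorem append_singleton_sublist_blockPrefix {γ L : List α} {x : α} {j : ℕ} (hj : 0 < j)
    (hγ : γ <+ blockPrefix σ j) (hx : x ∉ γ) (hσ : σ j = L ++ [x]) :
    γ ++ [x] <+ blockPrefix σ j := by
  obtain ⟨j, rfl⟩ : ∃ j', j = j' + 1 := ⟨j - 1, by omega⟩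
  rw [blockPrefix_succ, hσ, ← append_assoc] at hγ ⊢
  exact (sublist_of_sublist_append_singleton hγ hx).append (Sublist.refl _)

theorem ForwardComplete.isKComplete_blockPrefix {A : Finset ℕ} {σ : ℕ → List ℕ} {N m i : ℕ}
    (h : ForwardComplete A (((range N).map fun i => σ (i + 1)).take m)) (hmN : m ≤ N)
    (hi : 0 < i) (him : i ≤ m) : IsKComplete A i (blockPrefix σ i) := by
  have := h i hi (by simp; omega)
  rwa [take_take, Nat.min_eq_left him, flatten_take_map_range (by omega)] at this

end Blocks

section Chain

variable {α : Type*} (e : ℕ → α) (z : α) (m : ℕ)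

def chainFrom (j : ℕ) : List α := (range' (j + 1) (m - j)).map e ++ [z]

variable {e z m}

theorem chainFrom_self : chainFrom e z m m = [z] := by
  simp [chainFrom]

theorem chainFrom_eq_cons {j : ℕ} (h : j < m) :
    chainFrom e z m j = e (j + 1) :: chainFrom e z m (j + 1) := by
  rw [chainFrom, show m - j = m - (j + 1) + 1 by omega, range'_succ]
  rfl

theorem append_chainFrom_sublist {σ : ℕ → List α} (hz : z ∈ σ m)
    (he : ∀ i, 0 < i → i < m → e (i + 1) ∈ σ i) {γ : List α} {j : ℕ} (hj : j < m)
    (hγ : γ <+ blockPrefix σ j) : γ ++ chainFrom e z m (j + 1) <+ blockPrefix σ m := by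
  induction hd : m - (j + 1) generalizing j γ with
  | zero =>
    obtain rfl : m = j + 1 := by omega
    rw [chainFrom_self]
    exact append_sublist_blockPrefix hγ hj (singleton_sublist.2 hz)
  | succ d ih =>
    have hγ' : γ ++ [e (j + 2)] <+ blockPrefix σ (j + 1) :=
      append_sublist_blockPrefix hγ (by omega)
        (singleton_sublist.2 (he (j + 1) (by omega) (by omega)))
    rw [chainFrom_eq_cons (by omega)]
    simpa using ih (by omega) hγ' (by omega)

theorem append_chainFrom_sublist_of_isKComplete {e : ℕ → ℕ} {z : ℕ} {σ : ℕ → List ℕ}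
    {A : Finset ℕ} (hz : z ∈ σ m) (he1 : e 1 = z)
    (hlink : ∀ i, 0 < i → i < m → ∃ V T, σ i = V ++ e (i + 1) :: T ∧ ∀ b ∈ T, b = z ∨ b = e i)
    (hcomplete : ∀ i, 0 < i → i < m → IsKComplete A i (blockPrefix σ i)) {j : ℕ}
    (hj : 0 < j) (hjm : j < m) {δ : List ℕ} (hδ : DistinctSeq A j δ) (hzδ : z ∉ δ)
    (heδ : ∀ i, j < i → i ≤ m → e i ∉ δ) : δ ++ chainFrom e z m j <+ blockPrefix σ m := by
  induction j generalizing δ with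
  | zero => omega
  | succ j ih =>
    obtain ⟨V, T, hσ, hT⟩ := hlink (j + 1) hj hjm
    have hsub : δ <+ (blockPrefix σ j ++ V) ++ e (j + 2) :: T := by
      simpa [blockPrefix_succ, hσ] using hcomplete (j + 1) hj hjm δ hδ
    obtain ⟨δ₁, δ₂, rfl, h₁, h₂⟩ := sublist_append_iff.1 hsub
    obtain ⟨hlen, hnd, hA⟩ := hδ
    have hδ₂ : δ₂ = [] ∨ δ₂ = [e (j + 1)] := by
      refine eq_nil_or_eq_singleton_of_sublist_cons (hnd.sublist (sublist_append_right _ _)) h₂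
        (fun h => heδ (j + 2) (by omega) hjm (mem_append_right _ h)) fun c hc => ?_
      rcases hT c hc with rfl | rfl
      · exact .inl fun h => hzδ (mem_append_right _ h)
      · exact .inr rfl
    rcases hδ₂ with rfl | rfl
    · have h₁' : δ₁ ++ [e (j + 2)] <+ blockPrefix σ (j + 1) := by
        rw [blockPrefix_succ, hσ, ← append_assoc]
        exact h₁.append (by simp)
      have he : ∀ i, 0 < i → i < m → e (i + 1) ∈ σ i := fun i hi him => by
        obtain ⟨V, T, hσ, -⟩ := hlink i hi him
        simp [hσ]
      rw [append_nil, chainFrom_eq_cons hjm]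
      simpa using append_chainFrom_sublist hz he hjm h₁'
    · have hj0 : 0 < j := by
        rcases Nat.eq_zero_or_pos j with rfl | h
        · exact absurd (by simp [he1]) hzδ
        · exact h
      have := ih hj0 (by omega) ⟨by simpa using hlen, hnd.sublist (sublist_append_left _ _),
        fun a ha => hA a (mem_append_left _ ha)⟩ (fun h => hzδ (mem_append_left _ h))
        fun i hi him h => ?_
      · rwa [chainFrom_eq_cons (by omega), ← singleton_append, ← append_assoc] at this
      rcases Nat.lt_or_ge (j + 1) i with h' | h'
      · exact heδ i h' him (mem_append_left _ h)
      · obtain rfl : i = j + 1 := by omega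
        exact (nodup_append.1 hnd).2.2 _ h _ (mem_singleton_self _) rfl

end Chain

/-- The sequence `σ_j` of `T₂(j + p)`; it is `T2 n j` with `p = n - j` as long as `j + 5 ≤ n`. -/
def T2Closed (j p : ℕ) : List ℕ :=
  if j = 1 then range' 1 p ++ [p + 1]
  else if j = 3 then (p + 3) :: (range' 1 p ++ [p + 1])
  else if j % 3 = 1 then range' (p + 3) (j - 3) ++ range' 1 p ++ [j + p, p + 1]
  else if j % 3 = 2 then range' (p + 3) (j - 3) ++ range' 1 p ++ [p + 1]
  else (p + 3) :: (j + p) :: (range' (p + 4) (j - 4) ++ range' 1 p ++ [p + 1])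

theorem T2Closed_eq_append_singleton (j p : ℕ) : ∃ L, T2Closed j p = L ++ [p + 1] := by
  unfold T2Closed
  split_ifs
  exacts [⟨range' 1 p, rfl⟩, ⟨(p + 3) :: range' 1 p, rfl⟩,
    ⟨range' (p + 3) (j - 3) ++ range' 1 p ++ [j + p], by simp⟩,
    ⟨range' (p + 3) (j - 3) ++ range' 1 p, rfl⟩,
    ⟨(p + 3) :: (j + p) :: (range' (p + 4) (j - 4) ++ range' 1 p), by simp⟩]

theorem T2Closed_of_mod_three_eq_one {j : ℕ} (p : ℕ) (hj : 4 ≤ j) (h : j % 3 = 1) :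
    T2Closed j p = range' (p + 3) (j - 3) ++ range' 1 p ++ [j + p, p + 1] := by
  rw [T2Closed, if_neg (by omega), if_neg (by omega), if_pos h]

theorem T2Closed_of_mod_three_eq_two {j : ℕ} (p : ℕ) (h : j % 3 = 2) :
    T2Closed j p = range' (p + 3) (j - 3) ++ range' 1 p ++ [p + 1] := by
  rw [T2Closed, if_neg (by omega), if_neg (by omega), if_neg (by omega), if_pos h]

theorem T2Closed_of_mod_three_eq_zero {j : ℕ} (p : ℕ) (hj : 6 ≤ j) (h : j % 3 = 0) :
    T2Closed j p = (p + 3) :: (j + p) :: (range' (p + 4) (j - 4) ++ range' 1 p ++ [p + 1]) := by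
  rw [T2Closed, if_neg (by omega), if_neg (by omega), if_neg (by omega), if_neg (by omega)]

theorem T2_add_four_eq_T2Closed {j p : ℕ} (hp : 5 ≤ p)
    (h₁ : T2 (j + 4 + p) (j + 3) = T2Closed (j + 3) (p + 1))
    (h₂ : T2 (j + 4 + p) (j + 2) = T2Closed (j + 2) (p + 2)) :
    T2 (j + 4 + p) (j + 4) = T2Closed (j + 4) p := by
  obtain ⟨L, hL⟩ := T2Closed_eq_append_singleton (j + 2) (p + 2)
  simp only [T2]
  rw [if_neg (by omega), if_neg (by omega), if_neg (by omega), h₁, h₂, hL, getLastD_concat]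
  rcases (by omega : j = 0 ∨ (j % 3 = 0 ∧ 3 ≤ j) ∨ j % 3 = 1 ∨ j % 3 = 2) with
    rfl | ⟨hj, hj3⟩ | hj | hj
  · have hσ : T2Closed 3 (p + 1) = ((p + 4) :: range' 1 p) ++ [p + 1, p + 2] := by
      simp [T2Closed, range'_one_succ]
    rw [hσ, take_length_sub_two_append_pair, getLastD_dropLast_append_pair]
    simp [T2Closed]
  · obtain ⟨i, rfl⟩ : ∃ i, j = i + 1 := ⟨j - 1, by omega⟩
    have hσ : T2Closed (i + 4) (p + 1) =
        ((p + 4) :: (i + 5 + p) :: (range' (p + 5) i ++ range' 1 p)) ++ [p + 1, p + 2] := by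
      rw [T2Closed_of_mod_three_eq_zero _ (by omega) (by omega)]
      simp [range'_one_succ]; omega
    rw [if_pos (by omega), if_neg (by omega), hσ, take_length_sub_two_append_pair,
      getLastD_dropLast_append_pair, T2Closed_of_mod_three_eq_one _ (by omega) (by omega)]
    simp [range'_succ]
  · rw [if_neg (by omega), if_pos (by omega), T2Closed_of_mod_three_eq_one _ (by omega) (by omega),
      take_length_sub_two_append_pair, T2Closed_of_mod_three_eq_two _ (by omega), range'_one_succ,
      show j + 4 - 3 = j + 1 by omega, range'_succ]
    simp
  · rw [if_neg (by omega), if_neg (by omega), T2Closed_of_mod_three_eq_two _ (by omega),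
      T2Closed_of_mod_three_eq_zero _ (by omega) (by omega)]
    simp [range'_one_succ]

theorem T2_eq_T2Closed {n : ℕ} : ∀ {j : ℕ}, 0 < j → j + 5 ≤ n → T2 n j = T2Closed j (n - j)
  | 1, _, _ => by
    obtain ⟨p, rfl⟩ : ∃ p, n = p + 1 := ⟨n - 1, by omega⟩
    simp [T2, T1, T2Closed, range'_one_succ]
  | 2, _, _ => by
    obtain ⟨p, rfl⟩ : ∃ p, n = p + 2 := ⟨n - 2, by omega⟩
    simp [T2, T1, T2Closed, range'_one_succ]
  | 3, _, _ => by
    obtain ⟨p, rfl⟩ : ∃ p, n = p + 3 := ⟨n - 3, by omega⟩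
    simp [T2, T1, T2Closed, range'_one_succ]
    omega
  | j + 4, _, h => by
    obtain ⟨p, rfl⟩ : ∃ p, n = j + 4 + p := ⟨n - (j + 4), by omega⟩
    rw [Nat.add_sub_cancel_left]
    refine T2_add_four_eq_T2Closed (by omega) ?_ ?_ <;>
    · rw [T2_eq_T2Closed (by omega) (by omega)]
      congr 1
      omega

theorem exists_T2_eq_append_cons {n j : ℕ} (hj : 0 < j) (hjn : j + 5 ≤ n) :
    ∃ V T, T2 n j = V ++ (n - j) :: T ∧ ∀ b ∈ T, b = n ∨ b = n + 1 - j := by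
  rw [T2_eq_T2Closed hj hjn]
  obtain ⟨q, hq⟩ : ∃ q, n - j = q + 1 := ⟨n - j - 1, by omega⟩
  have hn : n + 1 - j = q + 2 := by omega
  rw [hq, hn]
  unfold T2Closed
  split_ifs
  · exact ⟨range' 1 q, [q + 2], by simp [range'_one_succ], by simp⟩
  · exact ⟨(q + 4) :: range' 1 q, [q + 2], by simp [range'_one_succ], by simp⟩
  · exact ⟨range' (q + 4) (j - 3) ++ range' 1 q, [j + (q + 1), q + 2],
      by simp [range'_one_succ], by simp; omega⟩
  · exact ⟨range' (q + 4) (j - 3) ++ range' 1 q, [q + 2], by simp [range'_one_succ], by simp⟩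
  · exact ⟨(q + 4) :: (j + (q + 1)) :: (range' (q + 5) (j - 4) ++ range' 1 q), [q + 2],
      by simp [range'_one_succ], by simp⟩

theorem exists_T2_eq_append_singleton {n j : ℕ} (hj : 0 < j) (hjn : j + 5 ≤ n) :
    ∃ L, T2 n j = L ++ [n + 1 - j] := by
  rw [T2_eq_T2Closed hj hjn, show n + 1 - j = n - j + 1 by omega]
  exact T2Closed_eq_append_singleton j (n - j)

theorem T2_eq_of_mod_three_eq_one {n j : ℕ} (hj : 4 ≤ j) (hj3 : j % 3 = 1) (hjn : j + 5 ≤ n) :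
    T2 n j = range' (n + 3 - j) (j - 3) ++ range' 1 (n - j) ++ [n, n + 1 - j] := by
  rw [T2_eq_T2Closed (by omega) hjn, T2Closed_of_mod_three_eq_one _ hj hj3,
    show n - j + 3 = n + 3 - j by omega, show j + (n - j) = n by omega,
    show n - j + 1 = n + 1 - j by omega]

theorem pair_sublist_T2_of_mod_three_eq_one {n j x : ℕ} (hj : 4 ≤ j) (hj3 : j % 3 = 1)
    (hjn : j + 5 ≤ n)
    (hx : x ∈ Finset.Icc 1 n) (hxn : x ≠ n) (hx₁ : x ≠ n + 1 - j) (hx₂ : x ≠ n + 2 - j) :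
    [x, n] <+ T2 n j := by
  rw [Finset.mem_Icc] at hx
  have hmem : x ∈ range' (n + 3 - j) (j - 3) ++ range' 1 (n - j) := by
    simp only [mem_append, mem_range'_1]
    omega
  rw [T2_eq_of_mod_three_eq_one hj hj3 hjn, ← singleton_append]
  exact (singleton_sublist.2 hmem).append (by simp)

theorem append_pair_sublist_blockPrefix_T2 {n m : ℕ} {δ : List ℕ} (hm : 1 < m) (hmn : m + 5 ≤ n)
    (hz : n ∈ T2 n m)
    (hcomplete : ∀ i, 0 < i → i < m → IsKComplete (Finset.Icc 1 n) i (blockPrefix (T2 n) i))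
    (hδ : DistinctSeq (Finset.Icc 1 n) (m - 1) δ) (hnδ : n ∉ δ) (heδ : n + 1 - m ∉ δ) :
    δ ++ [n + 1 - m, n] <+ blockPrefix (T2 n) m := by
  have hlink : ∀ i, 0 < i → i < m → ∃ V T, T2 n i = V ++ (n + 1 - (i + 1)) :: T ∧
      ∀ b ∈ T, b = n ∨ b = n + 1 - i := fun i hi him => by
    simpa using exists_T2_eq_append_cons hi (by omega)
  have := append_chainFrom_sublist_of_isKComplete hz (e := fun i => n + 1 - i) (by simp) hlink
    hcomplete (by omega) (by omega) hδ hnδ fun i hi him => by rwa [show i = m by omega]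
  rwa [chainFrom_eq_cons (by omega), Nat.sub_add_cancel (by omega), chainFrom_self] at this

theorem T2_last_n_sublist_general (n : ℕ) (hn3 : n % 3 = 0)
    (k : ℕ) (hk1 : 3 < k) (hk2 : k < n - 2) (hk3 : k % 3 = 2)
    (hfc : ForwardComplete (Finset.Icc 1 n) ((T2List n).take (k-2)))
    (ρ : List ℕ) (hρ : DistinctSeq (Finset.Icc 1 n) k ρ)
    (hlast : ρ.getLastD 0 = n) :
    ρ.Sublist (((T2List n).take (k-1)).flatten) := by
  obtain ⟨hlen, hnd, hA⟩ := hρ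
  obtain ⟨ρ', x, rfl⟩ := exists_eq_append_pair_of_getLastD (by omega) hlast
  obtain ⟨hnd', hxn, hdisj⟩ : ρ'.Nodup ∧ x ≠ n ∧ ∀ a ∈ ρ', a ≠ x ∧ a ≠ n := by
    simpa [nodup_append] using hnd
  have hρ' : DistinctSeq (Finset.Icc 1 n) (k - 2) ρ' :=
    ⟨by simp at hlen; omega, hnd', fun a ha => hA a (mem_append_left _ ha)⟩
  have hcomplete : ∀ i, 0 < i → i < k - 1 →
      IsKComplete (Finset.Icc 1 n) i (blockPrefix (T2 n) i) :=
    fun i hi hik => hfc.isKComplete_blockPrefix (by omega) hi (by omega)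
  have hρ'sub := hcomplete (k - 2) (by omega) (by omega) ρ' hρ'
  have hz : n ∈ T2 n (k - 1) := by
    simp [T2_eq_of_mod_three_eq_one (n := n) (j := k - 1) (by omega) (by omega) (by omega)]
  rw [T2List, flatten_take_map_range (by omega)]
  by_cases hx₁ : x = n + 1 - (k - 1)
  · subst hx₁
    exact append_pair_sublist_blockPrefix_T2 (by omega) (by omega) hz hcomplete
      (by rwa [show k - 1 - 1 = k - 2 by omega]) (fun h => (hdisj n h).2 rfl)
      fun h => (hdisj _ h).1 rfl
  by_cases hx₂ : x = n + 1 - (k - 2)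
  · obtain ⟨L, hL⟩ := exists_T2_eq_append_singleton (n := n) (j := k - 2) (by omega) (by omega)
    rw [← hx₂] at hL
    have := append_singleton_sublist_blockPrefix (by omega) hρ'sub (fun h => (hdisj x h).1 rfl) hL
    simpa using append_sublist_blockPrefix this (by omega) (singleton_sublist.2 hz)
  exact append_sublist_blockPrefix hρ'sub (by omega) (pair_sublist_T2_of_mod_three_eq_one
    (by omega) (by omega) (by omega) (hA x (by simp)) hxn hx₁ (by omega))

/-- Let `n ≥ 6`, `n ≡ 0 (mod 3)`, and let `σ₁,…,σ_n` be the `T₂(n)`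
list over `A = {1,…,n}`. Let `3 < k < n-2` with `k ≡ 2 (mod 3)` and assume
`σ₁,…,σ_{k-2}` is forward complete. Then every `ρ ∈ [A]_k` with last element `n`
is a subsequence of `σ₁σ₂⋯σ_{k-1}`. -/
theorem T2_last_n_sublist (n : ℕ) (hn : 6 ≤ n) (hn3 : n % 3 = 0)
    (k : ℕ) (hk1 : 3 < k) (hk2 : k < n - 2) (hk3 : k % 3 = 2)
    (hfc : ForwardComplete (Finset.Icc 1 n) ((T2List n).take (k-2)))
    (ρ : List ℕ) (hρ : DistinctSeq (Finset.Icc 1 n) k ρ)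
    (hlast : ρ.getLastD 0 = n) :
    ρ.Sublist (((T2List n).take (k-1)).flatten) :=
  T2_last_n_sublist_general n hn3 k hk1 hk2 hk3 hfc ρ hρ hlast
end
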